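/- For every k ∈ ℤ: if z ∈ ℂ ∖ (−∞,0] then a_k u_{k+1}(z) + b_k u_k(z) + a_{k-1} u_{k-1}(z) = −z u_k(z), and if z ∈ ℂ ∖ [0,∞) then a_k v_{k+1}(z) + b_k v_k(z) + a_{k-1} v_{k-1}(z) = −z v_k(z). -/

import Mathlib

/-! The recurrences are the contiguous relation `U(a-1) + (b-2a-z) U(a) + a(a-b+1) U(a+1) = 0`
for Kummer's function, at `a = k+ε+1/2+iρ, b = 1+2iρ` (for `u`) and at
`a = 1/2-k-ε-iρ, b = 1-2iρ`, argument `-z` (for `v`). That relation comes from the contiguous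
relation `(b-a) M(a-1) + (2a-b+z) M(a) - a M(a+1) = 0` for `M = ₁F₁`, a termwise identity of the
series, applied to both pieces of `U`. Normalizing by `|Γ(a)|` makes the recurrence symmetric:
since `conj a = a-b+1`, the factor `a(a-b+1)` is `|a|²`, and `|Γ(a+1)| = |a| |Γ(a)|`. -/

open Complex MeasureTheory

noncomputable section

/-- Pochhammer symbol `(a)_n`. -/
def poch (a : ℂ) (n : ℕ) : ℂ := ∏ i ∈ Finset.range n, (a + i)

/-- Confluent hypergeometric function `₁F₁(a;b;z)`. -/
def hyp1F1 (a b z : ℂ) : ℂ := ∑' n : ℕ, poch a n * z ^ n / (poch b n * (n.factorial : ℂ))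

/-- Second solution `U(a;b;z)` of the confluent hypergeometric equation (principal branch). -/
def USol (a b z : ℂ) : ℂ :=
  Complex.Gamma (1 - b) / Complex.Gamma (a - b + 1) * hyp1F1 a b z
  + Complex.Gamma (b - 1) / Complex.Gamma a * z ^ (1 - b) * hyp1F1 (a - b + 1) (2 - b) z

/-- `a_k = |k + ε + 1/2 + iρ|`. -/
def coefA (ρ ε : ℝ) (k : ℤ) : ℝ := ‖(k : ℂ) + (ε : ℂ) + 1/2 + I * (ρ : ℂ)‖

/-- `b_k = 2(k + ε)`. -/
def coefB (ρ ε : ℝ) (k : ℤ) : ℝ := 2 * ((k : ℝ) + ε)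

/-- The solution `s_k(z)`. -/
def sSol (ρ ε : ℝ) (k : ℤ) (z : ℂ) : ℂ :=
  (-1 : ℂ) ^ k * ((‖Complex.Gamma ((k : ℂ) + (ε : ℂ) + 1/2 + I * ρ)‖ : ℂ) /
      Complex.Gamma ((k : ℂ) + (ε : ℂ) + 1/2 - I * ρ)) *
    hyp1F1 ((k : ℂ) + (ε : ℂ) + 1/2 + I * ρ) (1 + 2 * I * ρ) z

/-- The solution `t_k(z)`. -/
def tSol (ρ ε : ℝ) (k : ℤ) (z : ℂ) : ℂ :=
  ((‖Complex.Gamma (1/2 - (k : ℂ) - (ε : ℂ) - I * ρ)‖ : ℂ) /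
      Complex.Gamma (1/2 - (k : ℂ) - (ε : ℂ) + I * ρ)) *
    hyp1F1 (1/2 - (k : ℂ) - (ε : ℂ) - I * ρ) (1 - 2 * I * ρ) (-z)

/-- The solution `u_k(z)`, for `z ∉ (-∞,0]`. -/
def uSol (ρ ε : ℝ) (k : ℤ) (z : ℂ) : ℂ :=
  (-1 : ℂ) ^ k * (‖Complex.Gamma ((k : ℂ) + (ε : ℂ) + 1/2 + I * ρ)‖ : ℂ) *
    USol ((k : ℂ) + (ε : ℂ) + 1/2 + I * ρ) (1 + 2 * I * ρ) z

/-- The solution `v_k(z)`, for `z ∉ [0,∞)`. -/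
def vSol (ρ ε : ℝ) (k : ℤ) (z : ℂ) : ℂ :=
  (‖Complex.Gamma (1/2 - (k : ℂ) - (ε : ℂ) - I * ρ)‖ : ℂ) *
    USol (1/2 - (k : ℂ) - (ε : ℂ) - I * ρ) (1 - 2 * I * ρ) (-z)

open Filter Topology

theorem poch_succ (a : ℂ) (n : ℕ) : poch a (n + 1) = poch a n * (a + n) :=
  Finset.prod_range_succ _ n

theorem poch_succ' (a : ℂ) (n : ℕ) : poch a (n + 1) = a * poch (a + 1) n := by
  simp only [poch, Finset.prod_range_succ', Nat.cast_add, Nat.cast_one, Nat.cast_zero, add_zero,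
    add_assoc, add_comm (1 : ℂ), mul_comm a]

theorem poch_ne_zero {b : ℂ} (hb : ∀ m : ℕ, b + m ≠ 0) (n : ℕ) : poch b n ≠ 0 :=
  Finset.prod_ne_zero_iff.mpr fun m _ ↦ hb m

def hyp1F1Term (a b z : ℂ) (n : ℕ) : ℂ := poch a n * z ^ n / (poch b n * (n.factorial : ℂ))

theorem hyp1F1Term_succ (a b z : ℂ) (n : ℕ) :
    hyp1F1Term a b z (n + 1) = hyp1F1Term a b z n * ((a + n) * z / ((b + n) * (n + 1))) := by
  simp only [hyp1F1Term, poch_succ, pow_succ, Nat.factorial_succ, Nat.cast_mul, Nat.cast_succ]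
  rw [div_mul_div_comm]
  ring_nf

theorem tendsto_hyp1F1Term_ratio (a b z : ℂ) :
    Tendsto (fun n : ℕ ↦ (a + n) * z / ((b + n) * (n + 1))) atTop (𝓝 0) := by
  have hinv : Tendsto (fun n : ℕ ↦ (n : ℂ)⁻¹) atTop (𝓝 0) := tendsto_inv_atTop_nhds_zero_nat
  -- in the variable `u = 1 / n` the ratio is a rational function vanishing at `u = 0`
  have hlim : Tendsto (fun n : ℕ ↦ (n : ℂ)⁻¹ * (1 + a * (n : ℂ)⁻¹) * z /
      ((1 + b * (n : ℂ)⁻¹) * (1 + (n : ℂ)⁻¹))) atTop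
      (𝓝 (0 * (1 + a * 0) * z / ((1 + b * 0) * (1 + 0)))) :=
    ((hinv.mul (tendsto_const_nhds.add (tendsto_const_nhds.mul hinv))).mul tendsto_const_nhds).div
      ((tendsto_const_nhds.add (tendsto_const_nhds.mul hinv)).mul (tendsto_const_nhds.add hinv))
      (by simp)
  rw [zero_mul, zero_mul, zero_div] at hlim
  refine hlim.congr' ?_
  filter_upwards [eventually_ne_atTop 0] with n hn
  have hn : (n : ℂ) ≠ 0 := Nat.cast_ne_zero.mpr hn
  field_simp
  ring

theorem summable_hyp1F1Term (a b z : ℂ) : Summable (hyp1F1Term a b z) := by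
  refine summable_of_ratio_norm_eventually_le (r := 1 / 2) (by norm_num) ?_
  have hsmall : ∀ᶠ n : ℕ in atTop, ‖(a + n) * z / ((b + n) * (n + 1))‖ ≤ 1 / 2 :=
    (tendsto_hyp1F1Term_ratio a b z).norm.eventually (ge_mem_nhds (by norm_num))
  filter_upwards [hsmall] with n hn
  rw [hyp1F1Term_succ, norm_mul, mul_comm (1 / 2 : ℝ)]
  exact mul_le_mul_of_nonneg_left hn (norm_nonneg _)

theorem hasSum_hyp1F1 (a b z : ℂ) : HasSum (hyp1F1Term a b z) (hyp1F1 a b z) :=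
  (summable_hyp1F1Term a b z).hasSum

theorem hyp1F1Term_contiguous (a : ℂ) {b : ℂ} (z : ℂ) (hb : ∀ m : ℕ, b + m ≠ 0) (n : ℕ) :
    a * hyp1F1Term (a + 1) b z (n + 1) - (b - a) * hyp1F1Term (a - 1) b z (n + 1)
      - (2 * a - b) * hyp1F1Term a b z (n + 1) = z * hyp1F1Term a b z n := by
  have hsucc : a * poch (a + 1) (n + 1) = poch a n * (a + n) * (a + 1 + n) := by
    rw [← poch_succ', poch_succ, poch_succ]; push_cast; ring
  have hpred : poch (a - 1) (n + 1) = (a - 1) * poch a n := by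
    rw [poch_succ', sub_add_cancel]
  have hpoch := poch_ne_zero hb n
  have hbn := hb n
  have hn : (n : ℂ) + 1 ≠ 0 := by exact_mod_cast n.succ_ne_zero
  have hfact : (n.factorial : ℂ) ≠ 0 := by exact_mod_cast n.factorial_ne_zero
  simp only [hyp1F1Term]
  rw [mul_div_assoc', ← mul_assoc, hsucc, hpred, poch_succ a, poch_succ b, Nat.factorial_succ]
  push_cast
  field_simp
  ring

/-- DLMF 13.3.1. -/
theorem hyp1F1_contiguous (a : ℂ) {b : ℂ} (z : ℂ) (hb : ∀ m : ℕ, b + m ≠ 0) :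
    (b - a) * hyp1F1 (a - 1) b z + (2 * a - b + z) * hyp1F1 a b z - a * hyp1F1 (a + 1) b z = 0 := by
  set S : ℕ → ℂ := fun n ↦ a * hyp1F1Term (a + 1) b z n - (b - a) * hyp1F1Term (a - 1) b z n
    - (2 * a - b) * hyp1F1Term a b z n
  have hS : HasSum S
      (a * hyp1F1 (a + 1) b z - (b - a) * hyp1F1 (a - 1) b z - (2 * a - b) * hyp1F1 a b z) :=
    (((hasSum_hyp1F1 _ b z).mul_left a).sub ((hasSum_hyp1F1 _ b z).mul_left (b - a))).sub
      ((hasSum_hyp1F1 a b z).mul_left (2 * a - b))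
  have hS0 : S 0 = 0 := by simp [S, hyp1F1Term, poch]; ring
  rw [← hasSum_nat_add_iff' 1] at hS
  simp only [Finset.range_one, Finset.sum_singleton, hS0, sub_zero] at hS
  have hshift : HasSum (fun n ↦ S (n + 1)) (z * hyp1F1 a b z) := by
    simpa only [S, hyp1F1Term_contiguous a z hb] using (hasSum_hyp1F1 a b z).mul_left z
  linear_combination -(hS.unique hshift)

/-- DLMF 13.3.7. -/
theorem USol_contiguous (a : ℂ) {b : ℂ} (z : ℂ) (hb : ∀ m : ℕ, b + m ≠ 0)
    (hb' : ∀ m : ℕ, 2 - b + m ≠ 0) :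
    USol (a - 1) b z + (b - 2 * a - z) * USol a b z + a * (a - b + 1) * USol (a + 1) b z = 0 := by
  have hM := hyp1F1_contiguous a z hb
  have hM' := hyp1F1_contiguous (a - b + 1) z hb'
  rw [show a - b + 1 - 1 = a - b by ring, show a - b + 1 + 1 = a - b + 2 by ring] at hM'
  -- `1 / Γ` satisfies `1 / Γ(s) = s / Γ(s + 1)` with no exception, which clears all the poles
  have hΓ := one_div_Gamma_eq_self_mul_one_div_Gamma_add_one
  have g1 : (Gamma (a - b))⁻¹ = (a - b) * (Gamma (a - b + 1))⁻¹ := hΓ _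
  have g2 : (Gamma (a - b + 1))⁻¹ = (a - b + 1) * (Gamma (a - b + 2))⁻¹ := by
    rw [hΓ, add_assoc, one_add_one_eq_two]
  have g3 : (Gamma (a - 1))⁻¹ = (a - 1) * (Gamma a)⁻¹ := by rw [hΓ, sub_add_cancel]
  have g4 : (Gamma a)⁻¹ = a * (Gamma (a + 1))⁻¹ := hΓ a
  simp only [USol, div_eq_mul_inv, show a - 1 - b + 1 = a - b by ring,
    show a + 1 - b + 1 = a - b + 2 by ring, g1, g2, g3, g4]
  linear_combination (-(Gamma (1 - b) * (a - b + 1) * (Gamma (a - b + 2))⁻¹)) * hM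
    + (-(Gamma (b - 1) * z ^ (1 - b) * a * (Gamma (a + 1))⁻¹)) * hM'

theorem norm_Gamma_mul_USol_recurrence {a b : ℂ} (z : ℂ) (hb : ∀ m : ℕ, b + m ≠ 0)
    (hb' : ∀ m : ℕ, 2 - b + m ≠ 0) (ha : a ≠ 0) (ha' : a - 1 ≠ 0)
    (hconj : (starRingEnd ℂ) a = a - b + 1) :
    ‖a - 1‖ * (‖Gamma (a - 1)‖ * USol (a - 1) b z) + (b - 2 * a - z) * (‖Gamma a‖ * USol a b z)
      + ‖a‖ * (‖Gamma (a + 1)‖ * USol (a + 1) b z) = 0 := by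
  have hnorm_sq : (‖a‖ : ℂ) * ‖a‖ = a * (a - b + 1) := by
    rw [← hconj, Complex.mul_conj']; ring
  have hΓpred : (‖a - 1‖ : ℂ) * ‖Gamma (a - 1)‖ = ‖Gamma a‖ := by
    conv_rhs => rw [← sub_add_cancel a 1, Gamma_add_one _ ha', norm_mul]
    push_cast; rfl
  rw [Gamma_add_one a ha, norm_mul]
  push_cast
  linear_combination (‖Gamma a‖ : ℂ) * USol_contiguous a z hb hb'
    + USol (a - 1) b z * hΓpred + (‖Gamma a‖ * USol (a + 1) b z) * hnorm_sq

theorem ne_zero_of_im_ne_zero {w : ℂ} (hw : w.im ≠ 0) : w ≠ 0 := by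
  rintro rfl
  exact hw zero_im

theorem uSol_recurrence {ρ : ℝ} (ε : ℝ) (hρ : ρ ≠ 0) (z : ℂ) (k : ℤ) :
    (coefA ρ ε k : ℂ) * uSol ρ ε (k + 1) z + (coefB ρ ε k : ℂ) * uSol ρ ε k z +
      (coefA ρ ε (k - 1) : ℂ) * uSol ρ ε (k - 1) z = -z * uSol ρ ε k z := by
  set a : ℂ := k + ε + 1 / 2 + I * ρ
  set b : ℂ := 1 + 2 * I * ρ
  have hrec := norm_Gamma_mul_USol_recurrence (a := a) (b := b) z
    (fun m ↦ ne_zero_of_im_ne_zero (by simpa [b] using hρ))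
    (fun m ↦ ne_zero_of_im_ne_zero (by simpa [b] using hρ))
    (ne_zero_of_im_ne_zero (by simpa [a] using hρ)) (ne_zero_of_im_ne_zero (by simpa [a] using hρ))
    (Complex.ext (by simp [a, b]) (by simp [a, b]; ring))
  have hA' : coefA ρ ε (k - 1) = ‖a - 1‖ := by
    simp only [coefA, a]; push_cast; ring_nf
  have hB : (coefB ρ ε k : ℂ) = 2 * a - b := by
    simp only [coefB, a, b]; push_cast; ring
  have hsign : ∀ j : ℤ, (-1 : ℂ) ^ (k + j) = (-1) ^ k * (-1) ^ j :=
    fun j ↦ zpow_add₀ (by norm_num) k j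
  have hsucc : uSol ρ ε (k + 1) z = -(-1) ^ k * (‖Gamma (a + 1)‖ * USol (a + 1) b z) := by
    simp only [uSol, hsign, a, b]; push_cast; ring_nf
  have hpred : uSol ρ ε (k - 1) z = -(-1) ^ k * (‖Gamma (a - 1)‖ * USol (a - 1) b z) := by
    simp only [uSol, sub_eq_add_neg, hsign, a, b]; push_cast; ring_nf
  have hself : uSol ρ ε k z = (-1) ^ k * (‖Gamma a‖ * USol a b z) := by
    simp only [uSol, a, b]; ring
  rw [hsucc, hself, hpred, hB, hA', show coefA ρ ε k = ‖a‖ from rfl]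
  linear_combination (-(-1) ^ k) * hrec

theorem vSol_recurrence {ρ : ℝ} (ε : ℝ) (hρ : ρ ≠ 0) (z : ℂ) (k : ℤ) :
    (coefA ρ ε k : ℂ) * vSol ρ ε (k + 1) z + (coefB ρ ε k : ℂ) * vSol ρ ε k z +
      (coefA ρ ε (k - 1) : ℂ) * vSol ρ ε (k - 1) z = -z * vSol ρ ε k z := by
  set a : ℂ := 1 / 2 - k - ε - I * ρ
  set b : ℂ := 1 - 2 * I * ρ
  have hrec := norm_Gamma_mul_USol_recurrence (a := a) (b := b) (-z)
    (fun m ↦ ne_zero_of_im_ne_zero (by simpa [b] using hρ))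
    (fun m ↦ ne_zero_of_im_ne_zero (by simpa [b] using hρ))
    (ne_zero_of_im_ne_zero (by simpa [a] using hρ)) (ne_zero_of_im_ne_zero (by simpa [a] using hρ))
    (Complex.ext (by simp [a, b]) (by simp [a, b]; ring))
  have hA : coefA ρ ε k = ‖a - 1‖ := by
    rw [coefA, ← norm_neg]; congr 1; simp only [a]; ring
  have hA' : coefA ρ ε (k - 1) = ‖a‖ := by
    rw [coefA, ← norm_neg]; congr 1; simp only [a]; push_cast; ring
  have hB : (coefB ρ ε k : ℂ) = b - 2 * a := by
    simp only [coefB, a, b]; push_cast; ring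
  have hsucc : vSol ρ ε (k + 1) z = ‖Gamma (a - 1)‖ * USol (a - 1) b (-z) := by
    simp only [vSol, a, b]; push_cast; ring_nf
  have hpred : vSol ρ ε (k - 1) z = ‖Gamma (a + 1)‖ * USol (a + 1) b (-z) := by
    simp only [vSol, a, b]; push_cast; ring_nf
  rw [hsucc, hpred, hA, hA', hB, show vSol ρ ε k z = ‖Gamma a‖ * USol a b (-z) from rfl]
  linear_combination hrec

theorem laguerre_u_v_recurrence_general (ρ ε : ℝ) (hρ : 0 < ρ)
    (z : ℂ) (k : ℤ) :
    (¬(z.im = 0 ∧ z.re ≤ 0) →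
      (coefA ρ ε k : ℂ) * uSol ρ ε (k + 1) z + (coefB ρ ε k : ℂ) * uSol ρ ε k z +
        (coefA ρ ε (k - 1) : ℂ) * uSol ρ ε (k - 1) z = -z * uSol ρ ε k z) ∧
    (¬(z.im = 0 ∧ 0 ≤ z.re) →
      (coefA ρ ε k : ℂ) * vSol ρ ε (k + 1) z + (coefB ρ ε k : ℂ) * vSol ρ ε k z +
        (coefA ρ ε (k - 1) : ℂ) * vSol ρ ε (k - 1) z = -z * vSol ρ ε k z) :=
  ⟨fun _ ↦ uSol_recurrence ε hρ.ne' z k, fun _ ↦ vSol_recurrence ε hρ.ne' z k⟩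

/-- the sequences `u_k(z)` (for `z ∉ (-∞,0]`) and `v_k(z)` (for `z ∉ [0,∞)`)
satisfy the three-term recurrence `a_k f_{k+1} + b_k f_k + a_{k-1} f_{k-1} = -z f_k`. -/
theorem laguerre_u_v_recurrence (ρ ε : ℝ) (hρ : 0 < ρ) (hε : ε ∈ Set.Ico (0 : ℝ) 1)
    (z : ℂ) (k : ℤ) :
    (¬(z.im = 0 ∧ z.re ≤ 0) →
      (coefA ρ ε k : ℂ) * uSol ρ ε (k + 1) z + (coefB ρ ε k : ℂ) * uSol ρ ε k z +
        (coefA ρ ε (k - 1) : ℂ) * uSol ρ ε (k - 1) z = -z * uSol ρ ε k z) ∧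
    (¬(z.im = 0 ∧ 0 ≤ z.re) →
      (coefA ρ ε k : ℂ) * vSol ρ ε (k + 1) z + (coefB ρ ε k : ℂ) * vSol ρ ε k z +
        (coefA ρ ε (k - 1) : ℂ) * vSol ρ ε (k - 1) z = -z * vSol ρ ε k z) :=
  laguerre_u_v_recurrence_general ρ ε hρ z k
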